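/- arXiv:2504.14555 — 4 statements merged into one kernel-verified Lean document; each statement's English description precedes it below -/
import Mathlib

section
/- Let F be a distribution function on [0,M], m = ⌈M⌉, and ψ a given function on [0,M]. Define θ_F on [0,1] by θ_F(x) = −Σ_{i=0}^{m−1} (1−F(x+i)) ψ(x+i), and extend by θ_F(x+i) = θ_F(x+i−1) + ψ(x+i−1) for i = 1,…,m. Define φ_F(x) = F(x)θ_F(x) for x ∈ [0,1] and φ_F(x+i) − φ_F(x+i−1) = (F(x+i)−F(x+i−1))θ_F(x+i) for i = 1,…,m. Then for all x ∈ [0,M] with the relevant denominators positive, (φ_F(x+1)−φ_F(x))/(F(x+1)−F(x)) − (φ_F(x)−φ_F(x−1))/(F(x)−F(x−1)) = ψ(x). -/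
/-!
Writing a point of `[1, m + 1)` as `y + i` with `y ∈ [0, 1]`, the recursions hold on all of
`[1, m + 1)`, so at `x ∈ [0, M)` the increments of `φ` to the right and left of `x` are the increments
of `F` times `θ(x + 1)` and `θ(x)` (for `x < 1` the left one comes from `φ = Fθ` and the conventions
below `0`). Dividing out leaves `θ(x + 1) - θ(x) = ψ(x)`.
-/

lemma forall_Ico_of_forall_add_nat {m : ℕ} {P : ℝ → Prop}
    (h : ∀ y ∈ Set.Icc (0 : ℝ) 1, ∀ i ∈ Finset.Icc 1 m, P (y + i)) :
    ∀ x ∈ Set.Ico (1 : ℝ) (m + 1), P x := by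
  rintro x ⟨hx1, hxm⟩
  have hx0 : 0 ≤ x := by linarith
  have hn1 : 1 ≤ ⌊x⌋₊ := Nat.le_floor (by exact_mod_cast hx1)
  have hnm : ⌊x⌋₊ ≤ m := Nat.lt_succ_iff.mp ((Nat.floor_lt hx0).mpr (by exact_mod_cast hxm))
  have hy : x - ⌊x⌋₊ ∈ Set.Icc (0 : ℝ) 1 :=
    ⟨sub_nonneg.mpr (Nat.floor_le hx0), by linarith [Nat.lt_floor_add_one x]⟩
  simpa using h _ hy ⌊x⌋₊ (Finset.mem_Icc.mpr ⟨hn1, hnm⟩)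

theorem stmt_8_general (M : ℝ) (m : ℕ) (hm : m = ⌈M⌉₊)
    (F ψ θ φ : ℝ → ℝ)
    (hFlo : ∀ x < (0 : ℝ), F x = 0)
    (hFhi : ∀ x : ℝ, M ≤ x → F x = 1)
    (hφlo : ∀ x < (0 : ℝ), φ x = 0)
    (hθrec : ∀ x ∈ Set.Icc (0 : ℝ) 1, ∀ i ∈ Finset.Icc 1 m,
      θ (x + (i : ℝ)) = θ (x + (i : ℝ) - 1) + ψ (x + (i : ℝ) - 1))
    (hφbase : ∀ x ∈ Set.Icc (0 : ℝ) 1, φ x = F x * θ x)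
    (hφrec : ∀ x ∈ Set.Icc (0 : ℝ) 1, ∀ i ∈ Finset.Icc 1 m,
      φ (x + (i : ℝ)) - φ (x + (i : ℝ) - 1)
        = (F (x + (i : ℝ)) - F (x + (i : ℝ) - 1)) * θ (x + (i : ℝ))) :
    ∀ x ∈ Set.Icc (0 : ℝ) M,
      F (x + 1) - F x > 0 → F x - F (x - 1) > 0 →
      (φ (x + 1) - φ x) / (F (x + 1) - F x)
        - (φ x - φ (x - 1)) / (F x - F (x - 1)) = ψ x := by
  intro x hx hF1 hF2
  have hxM : x < M := by
    by_contra! hMx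
    rw [hFhi x hMx, hFhi (x + 1) (by linarith), sub_self] at hF1
    exact lt_irrefl 0 hF1
  have hxm : x + 1 ∈ Set.Ico (1 : ℝ) (m + 1) :=
    ⟨by linarith [hx.1], by linarith [hm ▸ Nat.le_ceil M]⟩
  have hφinc : ∀ z ∈ Set.Ico (1 : ℝ) (m + 1), φ z - φ (z - 1) = (F z - F (z - 1)) * θ z :=
    forall_Ico_of_forall_add_nat hφrec
  have hθinc : ∀ z ∈ Set.Ico (1 : ℝ) (m + 1), θ z = θ (z - 1) + ψ (z - 1) :=
    forall_Ico_of_forall_add_nat hθrec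
  have hright : φ (x + 1) - φ x = (F (x + 1) - F x) * θ (x + 1) := by
    simpa only [add_sub_cancel_right] using hφinc _ hxm
  have hθ : θ (x + 1) = θ x + ψ x := by
    simpa only [add_sub_cancel_right] using hθinc _ hxm
  have hleft : φ x - φ (x - 1) = (F x - F (x - 1)) * θ x := by
    rcases lt_or_ge x 1 with hx1 | hx1
    · rw [hφbase x ⟨hx.1, hx1.le⟩, hφlo (x - 1) (by linarith), hFlo (x - 1) (by linarith)]
      ring
    · exact hφinc x ⟨hx1, by linarith [hxm.2]⟩
  rw [hright, hleft, hθ, mul_div_cancel_left₀ _ hF1.ne', mul_div_cancel_left₀ _ hF2.ne']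
  ring

/-- Lemma A.1 (solution of the score equation system): with `θ_F` defined on `[0,1]`
by `θ_F(x) = -Σ_{i=0}^{m-1} (1-F(x+i)) ψ(x+i)` and extended by
`θ_F(x+i) = θ_F(x+i-1) + ψ(x+i-1)`, and `φ_F(x) = F(x)θ_F(x)` on `[0,1]` with
`φ_F(x+i) - φ_F(x+i-1) = (F(x+i)-F(x+i-1))θ_F(x+i)`, the score equation
`(φ_F(x+1)-φ_F(x))/(F(x+1)-F(x)) - (φ_F(x)-φ_F(x-1))/(F(x)-F(x-1)) = ψ(x)` holds. -/
theorem stmt_8 (M : ℝ) (hM : 0 < M) (m : ℕ) (hm : m = ⌈M⌉₊)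
    (F ψ θ φ : ℝ → ℝ)
    (hFlo : ∀ x < (0 : ℝ), F x = 0)
    (hFhi : ∀ x : ℝ, M ≤ x → F x = 1)
    (hφlo : ∀ x < (0 : ℝ), φ x = 0)
    (hθbase : ∀ x ∈ Set.Icc (0 : ℝ) 1,
      θ x = -∑ i ∈ Finset.range m, (1 - F (x + (i : ℝ))) * ψ (x + (i : ℝ)))
    (hθrec : ∀ x ∈ Set.Icc (0 : ℝ) 1, ∀ i ∈ Finset.Icc 1 m,
      θ (x + (i : ℝ)) = θ (x + (i : ℝ) - 1) + ψ (x + (i : ℝ) - 1))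
    (hφbase : ∀ x ∈ Set.Icc (0 : ℝ) 1, φ x = F x * θ x)
    (hφrec : ∀ x ∈ Set.Icc (0 : ℝ) 1, ∀ i ∈ Finset.Icc 1 m,
      φ (x + (i : ℝ)) - φ (x + (i : ℝ) - 1)
        = (F (x + (i : ℝ)) - F (x + (i : ℝ) - 1)) * θ (x + (i : ℝ))) :
    ∀ x ∈ Set.Icc (0 : ℝ) M,
      F (x + 1) - F x > 0 → F x - F (x - 1) > 0 →
      (φ (x + 1) - φ x) / (F (x + 1) - F x)
        - (φ x - φ (x - 1)) / (F x - F (x - 1)) = ψ x :=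
  stmt_8_general M m hm F ψ θ φ hFlo hFhi hφlo hθrec hφbase hφrec
end

section
/- Let F₀ have a continuous positive density f₀ on (0,M) with F₀ concentrated on [0,M], and let t ∈ (0,1). Define θ_{h,t}(x+i) for x ∈ (0,1), i = 0,…,m−1, recursively by θ_{h,t}(x) = Σ_{i=0}^{m−1}(1−F₀(x+i))K_h'(t−(x+i)) and θ_{h,t}(x+i) = θ_{h,t}(x+i−1) − K_h'(t−(x+i−1)). Then ∫ θ_{h,t}(x)²(F₀(x)−F₀(x−1)) dx = ∫_{t−h}^{t+h} K_h'(t−x)² F₀(x)(1−F₀(x)) dx for h small enough that (t−h,t+h) ⊂ (0,1). -/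
/-!
Since `(t - h, t + h) ⊂ (0, 1)`, on `(0, 1)` only the `i = 0` term of the sum defining `θ`
survives, and the recursion subtracts `g (t - x)` once and nothing afterwards: for `x ∈ (0, 1)`,
`θ x = (1 - F₀ x) g (t - x)` and `θ (x + i) = -F₀ x g (t - x)` for `1 ≤ i ≤ m`. Cutting `(0, m + 1)`
into unit intervals and translating them onto `(0, 1)`, the integrand becomes
`g (t - x)² ((1 - F₀ x)² F₀ x + F₀ x² (F₀ (x + m) - F₀ x))`, which telescopes to
`g (t - x)² F₀ x (1 - F₀ x)` because `F₀ (x + m) = 1`. As `g` need not be integrable, the splitting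
is done with lower Lebesgue integrals of the nonnegative integrands.
-/

open MeasureTheory Finset

theorem map_addRight_restrict_Ioc (μ : Measure ℝ) [μ.IsAddRightInvariant] (a b c : ℝ) :
    (μ.restrict (Set.Ioc a b)).map (MeasurableEquiv.addRight c) =
      μ.restrict (Set.Ioc (a + c) (b + c)) := by
  conv_rhs => rw [← map_add_right_eq_self μ c, ← MeasurableEquiv.coe_addRight,
    MeasurableEquiv.restrict_map]
  simp

theorem restrict_Ioc_natCast_eq_sum_map (μ : Measure ℝ) [μ.IsAddRightInvariant] (n : ℕ) :
    μ.restrict (Set.Ioc 0 (n : ℝ)) =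
      ∑ i ∈ range n, (μ.restrict (Set.Ioc 0 1)).map (MeasurableEquiv.addRight (i : ℝ)) := by
  induction n with
  | zero => simp
  | succ n ih =>
    rw [sum_range_succ, ← ih, map_addRight_restrict_Ioc, zero_add, add_comm (1 : ℝ),
      ← Measure.restrict_union (Set.Ioc_disjoint_Ioc_of_le le_rfl) measurableSet_Ioc,
      Set.Ioc_union_Ioc_eq_Ioc n.cast_nonneg (by linarith), Nat.cast_succ]

theorem integral_Ioo_natCast_eq_integral_sum_add {φ : ℝ → ℝ} (hφ : ∀ x, 0 ≤ φ x) (n : ℕ)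
    (hmeas : ∀ i < n, AEMeasurable (fun x => φ (x + i)) (volume.restrict (Set.Ioo 0 1))) :
    ∫ x in Set.Ioo 0 (n : ℝ), φ x = ∫ x in Set.Ioo 0 1, ∑ i ∈ range n, φ (x + i) := by
  have hμ : volume.restrict (Set.Ioo 0 (n : ℝ)) =
      ∑ i ∈ range n, (volume.restrict (Set.Ioo 0 1)).map (MeasurableEquiv.addRight (i : ℝ)) := by
    simp only [Measure.restrict_congr_set Ioo_ae_eq_Ioc]
    exact restrict_Ioc_natCast_eq_sum_map volume n
  have hφmeas : AEMeasurable φ (volume.restrict (Set.Ioo 0 (n : ℝ))) := by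
    rw [hμ, ← Measure.sum_coe_finset, aemeasurable_sum_measure_iff]
    rintro ⟨i, hi⟩
    rw [aemeasurable_map_equiv_iff]
    exact hmeas i (mem_range.mp hi)
  have hsum_meas : ∀ i ∈ range n, AEMeasurable (fun x => ENNReal.ofReal (φ (x + i)))
      (volume.restrict (Set.Ioo 0 1)) := fun i hi => (hmeas i (mem_range.mp hi)).ennreal_ofReal
  rw [integral_eq_lintegral_of_nonneg_ae (.of_forall hφ) hφmeas.aestronglyMeasurable,
    integral_eq_lintegral_of_nonneg_ae (.of_forall fun x => sum_nonneg fun i _ => hφ _)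
      (Finset.aemeasurable_fun_sum _ fun i hi => hmeas i (mem_range.mp hi)).aestronglyMeasurable]
  simp only [ENNReal.ofReal_sum_of_nonneg fun i _ => hφ _]
  rw [hμ, lintegral_finsetSum_measure, lintegral_finsetSum' _ hsum_meas]
  simp only [lintegral_map_equiv]; rfl

theorem apply_sub_eq_zero_of_notMem_Icc {g : ℝ → ℝ} {h : ℝ} (hg : ∀ u, h < |u| → g u = 0)
    {t x : ℝ} (hx : x ∉ Set.Icc (t - h) (t + h)) : g (t - x) = 0 := by
  rw [Set.mem_Icc, not_and_or, not_le, not_le] at hx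
  refine hg _ (lt_abs.mpr ?_)
  rcases hx with hx | hx
  · left; linarith
  · right; linarith

theorem theta_add_natCast_eq {F₀ g θ : ℝ → ℝ} {m : ℕ} {t h : ℝ} (hm : 0 < m)
    (hth : t + h < 1) (hg : ∀ u, h < |u| → g u = 0)
    (hθbase : ∀ x ∈ Set.Ioo (0 : ℝ) 1,
      θ x = ∑ i ∈ range m, (1 - F₀ (x + (i : ℝ))) * g (t - (x + (i : ℝ))))
    (hθrec : ∀ x ∈ Set.Ioo (0 : ℝ) 1, ∀ i ∈ Icc 1 m,
      θ (x + (i : ℝ)) = θ (x + (i : ℝ) - 1) - g (t - (x + (i : ℝ) - 1)))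
    (x : ℝ) (hx : x ∈ Set.Ioo 0 1) (i : ℕ) (hi : i ≤ m) :
    θ (x + i) = ((if i = 0 then 1 else 0) - F₀ x) * g (t - x) := by
  have hg_shift : ∀ k : ℕ, 0 < k → g (t - (x + k)) = 0 := fun k hk =>
    apply_sub_eq_zero_of_notMem_Icc hg fun hmem => by
      have : (1 : ℝ) ≤ k := by exact_mod_cast hk
      linarith [hmem.2, hx.1]
  induction i with
  | zero =>
    rw [Nat.cast_zero, add_zero, hθbase x hx, sum_eq_single_of_mem 0 (mem_range.mpr hm)
      fun k _ hk => by rw [hg_shift k (Nat.pos_of_ne_zero hk), mul_zero]]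
    simp
  | succ k ih =>
    rw [hθrec x hx (k + 1) (mem_Icc.mpr ⟨le_add_self, hi⟩), Nat.cast_succ, add_sub_assoc,
      add_sub_cancel_right, ih (by omega)]
    rcases Nat.eq_zero_or_pos k with rfl | hk
    · simp only [Nat.cast_zero, add_zero, zero_add, one_ne_zero, if_true, if_false]
      ring
    · rw [hg_shift k hk]; simp [hk.ne']

theorem sum_range_ite_sq_mul_sub {F₀ : ℝ → ℝ} {x : ℝ} (m : ℕ) (c : ℝ) (hF₀ : F₀ (x - 1) = 0)
    (hF₁ : F₀ (x + m) = 1) :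
    ∑ i ∈ range (m + 1), (((if i = 0 then 1 else 0) - F₀ x) * c) ^ 2 *
        (F₀ (x + i) - F₀ (x + i - 1)) = c ^ 2 * (F₀ x * (1 - F₀ x)) := by
  have htel := sum_range_sub (fun i : ℕ => F₀ (x + i)) m
  simp only [Nat.cast_succ, ← add_assoc, Nat.cast_zero, add_zero, hF₁] at htel
  rw [sum_range_succ']
  simp only [Nat.succ_ne_zero, if_false, Nat.cast_succ, ← add_assoc, add_sub_cancel_right,
    ← mul_sum, htel, if_true, Nat.cast_zero, add_zero, hF₀]
  ring

theorem stmt_11_general (M : ℝ) (hM : 0 < M) (m : ℕ) (hm : m = ⌈M⌉₊)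
    (F₀ : ℝ → ℝ) (hmono : Monotone F₀)
    (hzero : ∀ x ≤ (0 : ℝ), F₀ x = 0)
    (hone : ∀ x : ℝ, M ≤ x → F₀ x = 1)
    (t h : ℝ) (hth : 0 < t - h ∧ t + h < 1)
    (g : ℝ → ℝ) (hgsupp : ∀ u : ℝ, h < |u| → g u = 0)
    (hgmeas : Measurable g)
    (θ : ℝ → ℝ)
    (hθbase : ∀ x ∈ Set.Ioo (0 : ℝ) 1,
      θ x = ∑ i ∈ Finset.range m, (1 - F₀ (x + (i : ℝ))) * g (t - (x + (i : ℝ))))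
    (hθrec : ∀ x ∈ Set.Ioo (0 : ℝ) 1, ∀ i ∈ Finset.Icc 1 m,
      θ (x + (i : ℝ)) = θ (x + (i : ℝ) - 1) - g (t - (x + (i : ℝ) - 1))) :
    ∫ x in Set.Ioo (0 : ℝ) ((m : ℝ) + 1), θ x ^ 2 * (F₀ x - F₀ (x - 1))
      = ∫ x in Set.Ioo (t - h) (t + h), g (t - x) ^ 2 * (F₀ x * (1 - F₀ x)) := by
  have hm₀ : 0 < m := hm ▸ Nat.ceil_pos.mpr hM
  have hMm : M ≤ m := hm ▸ Nat.le_ceil M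
  have hθ := theta_add_natCast_eq hm₀ hth.2 hgsupp hθbase hθrec
  have hF₀ : Measurable F₀ := hmono.measurable
  have hmeas : ∀ i < m + 1, AEMeasurable (fun x => θ (x + i) ^ 2 * (F₀ (x + i) - F₀ (x + i - 1)))
      (volume.restrict (Set.Ioo 0 1)) := fun i hi =>
    (by fun_prop : Measurable fun x => (((if i = 0 then 1 else 0) - F₀ x) * g (t - x)) ^ 2 *
      (F₀ (x + i) - F₀ (x + i - 1))).aemeasurable.congr <|
      ae_restrict_of_forall_mem measurableSet_Ioo fun x hx => by
        dsimp only
        rw [hθ x hx i (by omega)]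
  have hsum : Set.EqOn
      (fun x => ∑ i ∈ range (m + 1), θ (x + i) ^ 2 * (F₀ (x + i) - F₀ (x + i - 1)))
      (fun x => g (t - x) ^ 2 * (F₀ x * (1 - F₀ x))) (Set.Ioo 0 1) := fun x hx =>
    (sum_congr rfl fun i hi => by rw [hθ x hx i (Nat.lt_succ_iff.mp (mem_range.mp hi))]).trans
      (sum_range_ite_sq_mul_sub m _ (hzero _ (by linarith [hx.2])) (hone _ (by linarith [hx.1])))
  calc ∫ x in Set.Ioo (0 : ℝ) ((m : ℝ) + 1), θ x ^ 2 * (F₀ x - F₀ (x - 1))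
      = ∫ x in Set.Ioo 0 1,
          ∑ i ∈ range (m + 1), θ (x + i) ^ 2 * (F₀ (x + i) - F₀ (x + i - 1)) := by
        rw [← Nat.cast_succ]
        exact integral_Ioo_natCast_eq_integral_sum_add
          (fun x => mul_nonneg (sq_nonneg _) (sub_nonneg.mpr (hmono (by linarith)))) _ hmeas
    _ = ∫ x in Set.Ioo 0 1, g (t - x) ^ 2 * (F₀ x * (1 - F₀ x)) :=
        setIntegral_congr_fun measurableSet_Ioo hsum
    _ = ∫ x in Set.Icc (t - h) (t + h), g (t - x) ^ 2 * (F₀ x * (1 - F₀ x)) :=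
        setIntegral_eq_of_subset_of_forall_sdiff_eq_zero measurableSet_Ioo
          (Set.Icc_subset_Ioo hth.1 hth.2) fun x hx => by
            rw [apply_sub_eq_zero_of_notMem_Icc hgsupp hx.2]; ring
    _ = _ := integral_Icc_eq_integral_Ioo

/-- Exact variance identity for the kernel density estimator score (Example 2):
`∫ θ_{h,t}(x)² (F₀(x) - F₀(x-1)) dx = ∫_{t-h}^{t+h} K_h'(t-x)² F₀(x)(1-F₀(x)) dx`,
where `g = K_h'` is supported on `[-h,h]` and `θ_{h,t}` is defined by the recursion
`θ(x) = Σ_{i=0}^{m-1}(1-F₀(x+i)) g(t-(x+i))`, `θ(x+i) = θ(x+i-1) - g(t-(x+i-1))`. -/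
theorem stmt_11 (M : ℝ) (hM : 0 < M) (m : ℕ) (hm : m = ⌈M⌉₊)
    (F₀ : ℝ → ℝ) (hmono : Monotone F₀)
    (hzero : ∀ x ≤ (0 : ℝ), F₀ x = 0)
    (hone : ∀ x : ℝ, M ≤ x → F₀ x = 1)
    (t h : ℝ) (hh : 0 < h) (hth : 0 < t - h ∧ t + h < 1)
    (g : ℝ → ℝ) (hgsupp : ∀ u : ℝ, h < |u| → g u = 0)
    (hgmeas : Measurable g)
    (θ : ℝ → ℝ)
    (hθbase : ∀ x ∈ Set.Ioo (0 : ℝ) 1,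
      θ x = ∑ i ∈ Finset.range m, (1 - F₀ (x + (i : ℝ))) * g (t - (x + (i : ℝ))))
    (hθrec : ∀ x ∈ Set.Ioo (0 : ℝ) 1, ∀ i ∈ Finset.Icc 1 m,
      θ (x + (i : ℝ)) = θ (x + (i : ℝ) - 1) - g (t - (x + (i : ℝ) - 1))) :
    ∫ x in Set.Ioo (0 : ℝ) ((m : ℝ) + 1), θ x ^ 2 * (F₀ x - F₀ (x - 1))
      = ∫ x in Set.Ioo (t - h) (t + h), g (t - x) ^ 2 * (F₀ x * (1 - F₀ x)) :=
  stmt_11_general M hM m hm F₀ hmono hzero hone t h hth g hgsupp hgmeas θ hθbase hθrec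
end

section
/- Let F₀ be the truncated exponential CDF on [0,2] and θ the score function of Example 1 (closed-form on [0,3]). Then ∫_0^3 θ(x)² (F₀(x) − F₀(x−1)) dx has an explicit closed form in e, whose numerical value is approximately 0.357915. -/
open Real

/-!
On each of `[0,1]`, `[1,2]` and `[2,3]` both `θ` and the density `F₀(x) - F₀(x-1)` are affine
functions of `e^{-x}`, so the integrand is a cubic polynomial in `e^{-x}` with an explicit
antiderivative. The interval integral only sees the half-open pieces `(p, q]`, on which the
hypotheses describe `θ` and `F₀` exactly. Summing the three contributions gives
`(e⁴ + 2e³ - 8e² - 2e - 1) / (2(e² - 1)²) = 0.35791504...`.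
-/

open Set MeasureTheory intervalIntegral

lemma exp_ofNat (n : ℕ) [n.AtLeastTwo] :
    exp (no_index (OfNat.ofNat n : ℝ)) = exp 1 ^ (OfNat.ofNat n : ℕ) := by
  rw [exp_one_pow]; norm_cast

noncomputable def sqMulExpNeg (α β γ δ t : ℝ) : ℝ :=
  (α + β * exp (-t)) ^ 2 * (γ + δ * exp (-t))

noncomputable def sqMulExpNegPrimitive (α β γ δ t : ℝ) : ℝ :=
  α ^ 2 * γ * t - (α ^ 2 * δ + 2 * α * β * γ) * exp (-t)
    - (β ^ 2 * γ + 2 * α * β * δ) / 2 * exp (-t) ^ 2 - β ^ 2 * δ / 3 * exp (-t) ^ 3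

section SqMulExpNeg

variable (α β γ δ : ℝ)

lemma hasDerivAt_sqMulExpNegPrimitive (x : ℝ) :
    HasDerivAt (sqMulExpNegPrimitive α β γ δ) (sqMulExpNeg α β γ δ x) x := by
  have hy : HasDerivAt (fun t => exp (-t)) (-exp (-x)) x := by
    simpa using (hasDerivAt_neg x).exp
  unfold sqMulExpNeg
  exact ((((hasDerivAt_id x).const_mul _).sub (hy.const_mul _)).sub ((hy.pow 2).const_mul _)).sub
    ((hy.pow 3).const_mul _) |>.congr_deriv (by push_cast; ring)

lemma continuous_sqMulExpNeg : Continuous (sqMulExpNeg α β γ δ) := by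
  unfold sqMulExpNeg; fun_prop

lemma integral_sqMulExpNeg (p q : ℝ) :
    ∫ x in p..q, sqMulExpNeg α β γ δ x =
      sqMulExpNegPrimitive α β γ δ q - sqMulExpNegPrimitive α β γ δ p :=
  integral_eq_sub_of_hasDerivAt (fun x _ => hasDerivAt_sqMulExpNegPrimitive α β γ δ x)
    ((continuous_sqMulExpNeg α β γ δ).intervalIntegrable p q)

variable {α β γ δ} in
lemma intervalIntegrable_and_integral_of_eqOn_sqMulExpNeg {f : ℝ → ℝ} {p q : ℝ} (hpq : p ≤ q)
    (h : EqOn f (sqMulExpNeg α β γ δ) (Ioc p q)) :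
    IntervalIntegrable f volume p q ∧
      ∫ x in p..q, f x = sqMulExpNegPrimitive α β γ δ q - sqMulExpNegPrimitive α β γ δ p := by
  rw [← uIoc_of_le hpq] at h
  refine ⟨((continuous_sqMulExpNeg α β γ δ).intervalIntegrable p q).congr h.symm, ?_⟩
  rw [← integral_sqMulExpNeg]
  exact integral_congr_ae (Filter.Eventually.of_forall fun x hx => h hx)

end SqMulExpNeg

lemma abs_exp_one_quartic_div_sub_lt :
    |(exp 1 ^ 4 + 2 * exp 1 ^ 3 - 8 * exp 1 ^ 2 - 2 * exp 1 - 1) / (2 * (exp 1 ^ 2 - 1) ^ 2)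
      - 0.357915| < 1e-5 := by
  have hlo := exp_one_gt_d9
  have hhi := exp_one_lt_d9
  have hden : 0 < 2 * (exp 1 ^ 2 - 1) ^ 2 := by
    have : 1 < exp 1 ^ 2 := by nlinarith
    positivity
  rw [abs_sub_lt_iff, sub_lt_iff_lt_add, sub_lt_comm, div_lt_iff₀ hden, lt_div_iff₀ hden]
  constructor <;>
    nlinarith [mul_pos (sub_pos.2 hlo) (sub_pos.2 hhi), mul_pos (sub_pos.2 hlo) (sub_pos.2 hlo)]

/-- The asymptotic variance `∫_0^3 θ(x)² (F₀(x) - F₀(x-1)) dx` of the mean functional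
for the truncated exponential distribution on `[0,2]` has a closed form in `e`
whose numerical value is approximately `0.357915`. -/
theorem stmt_13 (F₀ θ : ℝ → ℝ)
    (hF₀mid : ∀ x ∈ Set.Icc (0 : ℝ) 2, F₀ x = (1 - exp (-x)) / (1 - exp (-2)))
    (hF₀hi : ∀ x : ℝ, 2 < x → F₀ x = 1)
    (hF₀lo : ∀ x : ℝ, x < 0 → F₀ x = 0)
    (hθ1 : ∀ x ∈ Set.Icc (0 : ℝ) 1,
      θ x = (2 * exp x - exp 1 * (1 + exp 1)) / ((exp 1 ^ 2 - 1) * exp x))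
    (hθ2 : ∀ x ∈ Set.Ioc (1 : ℝ) 2,
      θ x = ((1 + exp 1 ^ 2) * exp x - exp 1 ^ 2 * (1 + exp 1)) / ((exp 1 ^ 2 - 1) * exp x))
    (hθ3 : ∀ x ∈ Set.Ioc (2 : ℝ) 3,
      θ x = (2 * exp 1 ^ 2 - (1 + exp 1) * exp (3 - x)) / (exp 1 ^ 2 - 1)) :
    |(∫ x in (0 : ℝ)..3, θ x ^ 2 * (F₀ x - F₀ (x - 1))) - 0.357915| < 1e-5 := by
  set e := exp 1 with he
  have he₀ : e ≠ 0 := (exp_pos 1).ne'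
  have hk : e ^ 2 - 1 ≠ 0 := by nlinarith [exp_one_gt_d9]
  have hF₀_nonpos : ∀ x ≤ 0, F₀ x = 0 := fun x hx => hx.lt_or_eq.elim (hF₀lo x) fun h => by
    simp [h, hF₀mid 0 ⟨le_rfl, zero_le_two⟩]
  obtain ⟨hi₁, hv₁⟩ := intervalIntegrable_and_integral_of_eqOn_sqMulExpNeg
    (α := 2 / (e ^ 2 - 1)) (β := -(e * (1 + e) / (e ^ 2 - 1)))
    (γ := e ^ 2 / (e ^ 2 - 1)) (δ := -(e ^ 2 / (e ^ 2 - 1)))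
    (f := fun x => θ x ^ 2 * (F₀ x - F₀ (x - 1))) zero_le_one fun x ⟨h₀, h₁⟩ => by
      simp only [hθ1 x ⟨h₀.le, h₁⟩, hF₀mid x ⟨h₀.le, by linarith⟩,
        hF₀_nonpos (x - 1) (by linarith), sqMulExpNeg, exp_neg, exp_ofNat, ← he]
      field_simp
      ring
  obtain ⟨hi₂, hv₂⟩ := intervalIntegrable_and_integral_of_eqOn_sqMulExpNeg
    (α := (1 + e ^ 2) / (e ^ 2 - 1)) (β := -(e ^ 2 * (1 + e) / (e ^ 2 - 1)))
    (γ := 0) (δ := e ^ 2 * (e - 1) / (e ^ 2 - 1))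
    (f := fun x => θ x ^ 2 * (F₀ x - F₀ (x - 1))) one_le_two fun x ⟨h₀, h₁⟩ => by
      simp only [hθ2 x ⟨h₀, h₁⟩, hF₀mid x ⟨by linarith, h₁⟩,
        hF₀mid (x - 1) ⟨by linarith, by linarith⟩, sqMulExpNeg, exp_neg, exp_sub, exp_ofNat, ← he]
      field_simp
      ring
  obtain ⟨hi₃, hv₃⟩ := intervalIntegrable_and_integral_of_eqOn_sqMulExpNeg
    (α := 2 * e ^ 2 / (e ^ 2 - 1)) (β := -((1 + e) * e ^ 3 / (e ^ 2 - 1)))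
    (γ := -(1 / (e ^ 2 - 1))) (δ := e ^ 3 / (e ^ 2 - 1))
    (f := fun x => θ x ^ 2 * (F₀ x - F₀ (x - 1))) (by norm_num : (2 : ℝ) ≤ 3) fun x ⟨h₀, h₁⟩ => by
      simp only [hθ3 x ⟨h₀, h₁⟩, hF₀hi x h₀, hF₀mid (x - 1) ⟨by linarith, by linarith⟩,
        sqMulExpNeg, exp_neg, exp_sub, exp_ofNat, ← he]
      field_simp
      ring
  have hval : ∫ x in (0 : ℝ)..3, θ x ^ 2 * (F₀ x - F₀ (x - 1)) =
      (e ^ 4 + 2 * e ^ 3 - 8 * e ^ 2 - 2 * e - 1) / (2 * (e ^ 2 - 1) ^ 2) := by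
    rw [← integral_add_adjacent_intervals hi₁ (hi₂.trans hi₃),
      ← integral_add_adjacent_intervals hi₂ hi₃, hv₁, hv₂, hv₃]
    simp only [sqMulExpNegPrimitive, exp_neg, exp_zero, exp_ofNat, ← he]
    field_simp
    ring
  rw [hval]
  exact abs_exp_one_quartic_div_sub_lt
end

section
/- Under the map S ↦ (Y, Δ) with Δ = 1_{S≤1}, Y = S·Δ + (S−1)(1−Δ), and F₀(1)=1, the log-likelihood Σ log(F(S_i) − F(S_i−1)) of the uniform deconvolution model equals the current status log-likelihood Σ (Δ_i log F(Y_i) + (1−Δ_i) log(1−F(Y_i))) for every distribution function F with F(x)=0 for x≤0 and F(1)=1. -/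
/-- If `F₀(1) = 1`-type `F` (with `F(x) = 0` for `x ≤ 0`, `F(1) = 1`), then under
`Δ_i = 1_{S_i ≤ 1}`, `Y_i = S_i Δ_i + (S_i - 1)(1 - Δ_i)`, the uniform
deconvolution log likelihood equals the current status log likelihood. -/
theorem stmt_16 {ι : Type*} (I : Finset ι) (S : ι → ℝ)
    (hS : ∀ i ∈ I, S i ∈ Set.Ioo (0 : ℝ) 2)
    (F : ℝ → ℝ) (hmono : Monotone F) (hle : ∀ x, F x ≤ 1)
    (hFlo : ∀ x ≤ (0 : ℝ), F x = 0) (hF1 : F 1 = 1)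
    (Δ : ι → ℝ) (hΔ : ∀ i, Δ i = if S i ≤ 1 then 1 else 0)
    (Y : ι → ℝ) (hY : ∀ i, Y i = S i * Δ i + (S i - 1) * (1 - Δ i)) :
    ∑ i ∈ I, Real.log (F (S i) - F (S i - 1))
      = ∑ i ∈ I, (Δ i * Real.log (F (Y i)) + (1 - Δ i) * Real.log (1 - F (Y i))) := by
  apply Finset.sum_congr rfl
  intro i hi
  rcases le_or_gt (S i) 1 with h | h
  · have hd : Δ i = 1 := by rw [hΔ i]; simp [h]
    have hy : Y i = S i := by rw [hY i, hd]; ring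
    have h0 : F (S i - 1) = 0 := hFlo _ (by linarith)
    rw [hd, hy, h0]; ring
  · have hd : Δ i = 0 := by rw [hΔ i]; simp [not_le.mpr h]
    have hy : Y i = S i - 1 := by rw [hY i, hd]; ring
    have h1 : F (S i) = 1 := le_antisymm (hle _) (hF1 ▸ hmono h.le)
    rw [hd, hy, h1]; ring
end
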